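/- If a Hoffman graph 𝔫 admits two decompositions into indecomposable addends, 𝔫 = ⊕_{i=0}^{k} 𝔫^i = ⊕_{i=0}^{l} 𝔪^i, then k = l and there exists a permutation σ of {0,...,k} such that 𝔫^i = 𝔪^{σ(i)} (as induced Hoffman subgraphs) for each i. -/

import Mathlib

/-- A Hoffman graph: a finite simple graph with vertices labeled slim or fat,
fat vertices pairwise non-adjacent, each fat vertex with a slim neighbor. -/
structure HoffmanGraph (V : Type) where
  adj : V → V → Prop
  symm : Symmetric adj
  irrefl : Irreflexive adj
  slim : V → Prop
  fat_slim_nbr : ∀ x, ¬ slim x → ∃ y, slim y ∧ adj x y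
  fat_not_adj : ∀ x y, ¬ slim x → ¬ slim y → ¬ adj x y

namespace HoffmanGraph

variable {V W U : Type}

def slimSet (H : HoffmanGraph V) : Set V := {x | H.slim x}

def toSimple (H : HoffmanGraph V) : SimpleGraph V where
  Adj := H.adj
  symm := ⟨fun a b h => H.symm h⟩
  loopless := ⟨fun a => H.irrefl a⟩

/-- common fat neighbours of `x` and `y` within the carrier set `S`. -/
def fatCommonOn (H : HoffmanGraph V) (S : Set V) (x y : V) : Set V :=
  {z | z ∈ S ∧ ¬ H.slim z ∧ H.adj x z ∧ H.adj y z}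

/-- The induced Hoffman subgraph of `H` on `S` is the sum of the induced subgraphs
on the sets `P i`. -/
def IsSumOn (H : HoffmanGraph V) (S : Set V) {ι : Type} (P : ι → Set V) : Prop :=
  (∀ i, P i ⊆ S) ∧
  (⋃ i, P i) = S ∧
  (∀ x ∈ S, H.slim x → ∃! i, x ∈ P i) ∧
  (∀ i, ∀ x ∈ P i, H.slim x → ∀ z ∈ S, ¬ H.slim z → H.adj x z → z ∈ P i) ∧
  (∀ i, ∀ z ∈ P i, ¬ H.slim z → ∃ x ∈ P i, H.slim x ∧ H.adj z x) ∧
  (∀ i j, i ≠ j → ∀ x ∈ P i, ∀ y ∈ P j, H.slim x → H.slim y →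
    (H.fatCommonOn S x y).ncard ≤ 1 ∧ ((H.fatCommonOn S x y).ncard = 1 ↔ H.adj x y))

/-- Binary sum. -/
def IsSumOn2 (H : HoffmanGraph V) (S A B : Set V) : Prop :=
  H.IsSumOn S (fun b : Bool => if b then A else B)

/-- The induced Hoffman subgraph on `S` is non-empty and not a sum of two non-empty
Hoffman subgraphs. -/
def Indecomposable (H : HoffmanGraph V) (S : Set V) : Prop :=
  S.Nonempty ∧ ∀ A B : Set V, A.Nonempty → B.Nonempty → ¬ H.IsSumOn2 S A B

/-- `⟪X⟫`: `X` together with the fat neighbours (inside the carrier `S`) of its members. -/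
def hind (H : HoffmanGraph V) (S X : Set V) : Set V :=
  X ∪ {z | z ∈ S ∧ ¬ H.slim z ∧ ∃ x ∈ X, H.adj x z}

/-- `e` is an isomorphism of Hoffman graphs. -/
def IsIso (H : HoffmanGraph V) (K : HoffmanGraph W) (e : V ≃ W) : Prop :=
  (∀ x y, H.adj x y ↔ K.adj (e x) (e y)) ∧ ∀ x, (H.slim x ↔ K.slim (e x))

/-- `K` is isomorphic to the induced Hoffman subgraph of `L` on `S`. -/
def IsoToInduced (K : HoffmanGraph W) (L : HoffmanGraph U) (S : Set U) : Prop :=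
  ∃ e : W ≃ S, (∀ x y, K.adj x y ↔ L.adj (e x).1 (e y).1) ∧ ∀ x, (K.slim x ↔ L.slim (e x).1)

/-- `K` is isomorphic to an induced Hoffman subgraph of `L`. -/
def IsSubgraphOf (K : HoffmanGraph W) (L : HoffmanGraph U) : Prop :=
  ∃ S : Set U, IsoToInduced K L S

/-- The induced Hoffman subgraph on `S` is (isomorphic to) `𝔥₂`:
one slim vertex adjacent to two fat vertices. -/
def IsH2On (H : HoffmanGraph V) (S : Set V) : Prop :=
  ∃ s f₁ f₂ : V, f₁ ≠ f₂ ∧ S = {s, f₁, f₂} ∧ H.slim s ∧ ¬ H.slim f₁ ∧ ¬ H.slim f₂ ∧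
    H.adj s f₁ ∧ H.adj s f₂

/-- The induced Hoffman subgraph on `S` belongs to the family `𝔒`: it is `𝔥₂` or an
indecomposable fat Hoffman graph with at least 2 slim vertices and exactly one fat vertex. -/
def MemO (H : HoffmanGraph V) (S : Set V) : Prop :=
  H.IsH2On S ∨
  (H.Indecomposable S ∧ 2 ≤ (S ∩ H.slimSet).ncard ∧
    ∃ w ∈ S, ¬ H.slim w ∧ (∀ z ∈ S, ¬ H.slim z → z = w) ∧ ∀ x ∈ S, H.slim x → H.adj x w)

/-- The induced Hoffman subgraph of `L` on `S` is isomorphic to a member of the family `ℋ`. -/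
def MemFam (ℋ : ∀ W : Type, HoffmanGraph W → Prop) (L : HoffmanGraph U) (S : Set U) : Prop :=
  ∃ (W : Type) (K : HoffmanGraph W), ℋ W K ∧ IsoToInduced K L S

/-- `K` is a sum of members of `ℋ`. -/
def IsCoverGraph (ℋ : ∀ W : Type, HoffmanGraph W → Prop) (K : HoffmanGraph U) : Prop :=
  ∃ (n : ℕ) (P : Fin n → Set U), K.IsSumOn Set.univ P ∧ ∀ i, MemFam ℋ K (P i)

/-- `G` is a slim `ℋ`-line graph. -/
def IsSlimLine (ℋ : ∀ W : Type, HoffmanGraph W → Prop) {V : Type} (G : SimpleGraph V) : Prop :=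
  ∃ (U : Type) (K : HoffmanGraph U) (ι : V → U), Finite U ∧ Function.Injective ι ∧
    (∀ a, K.slim (ι a)) ∧ (∀ a b, G.Adj a b ↔ K.adj (ι a) (ι b)) ∧ IsCoverGraph ℋ K

/-- `K` (with slim vertices identified with `V(G)` via `ι`) is a strict `ℋ`-cover of `G`. -/
def IsStrictCover (ℋ : ∀ W : Type, HoffmanGraph W → Prop) {V U : Type}
    (G : SimpleGraph V) (K : HoffmanGraph U) (ι : V → U) : Prop :=
  Finite U ∧ Function.Injective ι ∧ (∀ a b, G.Adj a b ↔ K.adj (ι a) (ι b)) ∧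
  (∀ u, K.slim u ↔ ∃ a, ι a = u) ∧ IsCoverGraph ℋ K

/-- Two strict covers are equivalent: an isomorphism restricting to the identity on `G`. -/
def EquivCovers {V U U' : Type} (K : HoffmanGraph U) (ι : V → U)
    (K' : HoffmanGraph U') (ι' : V → U') : Prop :=
  ∃ φ : U ≃ U', IsIso K K' φ ∧ ∀ a, φ (ι a) = ι' a

/-- The family `ℋ̄ = {𝔥₂} ∪ {𝔤 ∈ 𝔒 : 𝔤 is a Hoffman subgraph of a member of ℋ}`. -/
def BarFam (ℋ : ∀ W : Type, HoffmanGraph W → Prop) : ∀ W : Type, HoffmanGraph W → Prop :=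
  fun _ K => K.IsH2On Set.univ ∨
    (K.MemO Set.univ ∧ ∃ (U : Type) (L : HoffmanGraph U), ℋ U L ∧ IsSubgraphOf K L)

/-- `G` has a strict `ℱ`-cover and it is unique up to equivalence. -/
def UniqueStrictCover (ℱ : ∀ W : Type, HoffmanGraph W → Prop) {V : Type}
    (G : SimpleGraph V) : Prop :=
  (∃ (U : Type) (K : HoffmanGraph U) (ι : V → U), IsStrictCover ℱ G K ι) ∧
  ∀ (U U' : Type) (K : HoffmanGraph U) (K' : HoffmanGraph U') (ι : V → U) (ι' : V → U'),
    IsStrictCover ℱ G K ι → IsStrictCover ℱ G K' ι' → EquivCovers K ι K' ι'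

end HoffmanGraph

/-!
Call two slim vertices *linked* when they violate the compatibility conditions (4)–(5) of a sum.
Linked vertices lie in the same addend of every decomposition, so every addend is a union of
classes of the equivalence relation generated by linkage. Conversely, splitting an addend along
a linkage-closed set of slim vertices (each part taken together with its fat neighbours) is a sum
decomposition, so the slim vertices of an indecomposable addend form a single class. Hence an
indecomposable addend is determined by any one of its slim vertices, and two decompositions into
indecomposable addends match up addend by addend.
-/

namespace HoffmanGraph

variable {V : Type} {H : HoffmanGraph V} {S : Set V} {x y : V}

/-- Conditions (4) and (5) of a sum for slim vertices `x`, `y` in different addends. -/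
def Compatible (H : HoffmanGraph V) (S : Set V) (x y : V) : Prop :=
  (H.fatCommonOn S x y).ncard ≤ 1 ∧ ((H.fatCommonOn S x y).ncard = 1 ↔ H.adj x y)

def Linked (H : HoffmanGraph V) (x y : V) : Prop :=
  H.slim x ∧ H.slim y ∧ ¬ H.Compatible Set.univ x y

lemma fatCommonOn_comm (H : HoffmanGraph V) (S : Set V) (x y : V) :
    H.fatCommonOn S x y = H.fatCommonOn S y x := by
  ext z
  simp only [fatCommonOn, Set.mem_ofPred_eq]
  tauto

lemma compatible_comm : H.Compatible S x y ↔ H.Compatible S y x := by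
  have hadj : H.adj x y ↔ H.adj y x := ⟨fun h => H.symm h, fun h => H.symm h⟩
  rw [Compatible, Compatible, fatCommonOn_comm, hadj]

lemma Linked.symm (h : H.Linked x y) : H.Linked y x :=
  ⟨h.2.1, h.1, fun h' => h.2.2 (compatible_comm.1 h')⟩

lemma fatCommonOn_eq_univ (hS : ∀ z, ¬ H.slim z → H.adj x z → z ∈ S) :
    H.fatCommonOn S x y = H.fatCommonOn Set.univ x y := by
  ext z
  exact ⟨fun ⟨_, hz⟩ => ⟨trivial, hz⟩, fun ⟨_, hz⟩ => ⟨hS z hz.1 hz.2.1, hz⟩⟩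

lemma hind_subset {X : Set V} (hX : X ⊆ S) : H.hind S X ⊆ S := by
  rintro v (hv | ⟨hv, _⟩)
  exacts [hX hv, hv]

lemma mem_of_mem_hind {X : Set V} (hv : x ∈ H.hind S X) (hs : H.slim x) : x ∈ X := by
  rcases hv with hv | ⟨_, hf, _⟩
  exacts [hv, absurd hs hf]

lemma isSumOn2_hind_of_linked_closed
    (hfat : ∀ x ∈ S, H.slim x → ∀ z, ¬ H.slim z → H.adj x z → z ∈ S)
    (hslim : ∀ z ∈ S, ¬ H.slim z → ∃ x ∈ S, H.slim x ∧ H.adj z x)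
    (p : V → Prop) (hp : ∀ x y, H.Linked x y → p x → p y) :
    H.IsSumOn2 S (H.hind S {x | x ∈ S ∧ H.slim x ∧ p x})
      (H.hind S {x | x ∈ S ∧ H.slim x ∧ ¬ p x}) := by
  classical
  set part : Bool → Set V := fun b => {x | x ∈ S ∧ H.slim x ∧ (p x ↔ b = true)}
  have hfam : (fun b : Bool => if b then H.hind S {x | x ∈ S ∧ H.slim x ∧ p x}
      else H.hind S {x | x ∈ S ∧ H.slim x ∧ ¬ p x}) = fun b => H.hind S (part b) := by
    funext b
    cases b <;> simp [part]
  have hpart : ∀ {x}, x ∈ S → H.slim x → x ∈ part (decide (p x)) := fun hx hs =>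
    ⟨hx, hs, by simp⟩
  have hlinked : ∀ x y, H.Linked x y → (p x ↔ p y) := fun x y h =>
    ⟨hp x y h, hp y x h.symm⟩
  rw [IsSumOn2, hfam]
  refine ⟨fun b => hind_subset fun _ hv => hv.1, ?_, ?_, ?_, ?_, ?_⟩
  · refine (Set.iUnion_subset fun b => hind_subset fun _ hv => hv.1).antisymm fun v hv => ?_
    by_cases hs : H.slim v
    · exact Set.mem_iUnion.2 ⟨_, Or.inl (hpart hv hs)⟩
    · obtain ⟨c, hc, hcs, hadj⟩ := hslim v hv hs
      exact Set.mem_iUnion.2 ⟨_, Or.inr ⟨hv, hs, c, hpart hc hcs, H.symm hadj⟩⟩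
  · intro v hv hs
    refine ⟨_, Or.inl (hpart hv hs), fun b hb => ?_⟩
    have := (mem_of_mem_hind hb hs).2.2
    cases b <;> simp_all
  · intro b v hv hs z hz hzf hadj
    exact Or.inr ⟨hz, hzf, v, mem_of_mem_hind hv hs, hadj⟩
  · rintro b z (hz | ⟨_, _, c, hc, hadj⟩) hzf
    exacts [absurd hz.2.1 hzf, ⟨c, Or.inl hc, hc.2.1, H.symm hadj⟩]
  · intro b b' hbb' v hv w hw hsv hsw
    have hv' := mem_of_mem_hind hv hsv
    have hw' := mem_of_mem_hind hw hsw
    have hnl : ¬ H.Linked v w := fun h => by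
      have hpv : p v ↔ b = true := hv'.2.2
      have hpw : p w ↔ b' = true := hw'.2.2
      have := hlinked v w h
      cases b <;> cases b' <;> simp_all
    have hc : H.Compatible Set.univ v w := by
      by_contra h
      exact hnl ⟨hsv, hsw, h⟩
    rwa [Compatible, ← fatCommonOn_eq_univ (hfat v hv'.1 hsv)] at hc

lemma reflTransGen_linked_of_indecomposable
    (hfat : ∀ x ∈ S, H.slim x → ∀ z, ¬ H.slim z → H.adj x z → z ∈ S)
    (hslim : ∀ z ∈ S, ¬ H.slim z → ∃ x ∈ S, H.slim x ∧ H.adj z x)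
    (hS : H.Indecomposable S) (hx : x ∈ S) (hy : y ∈ S) (hsx : H.slim x) (hsy : H.slim y) :
    Relation.ReflTransGen H.Linked x y := by
  by_contra hxy
  exact hS.2 _ _ ⟨x, Or.inl ⟨hx, hsx, .refl⟩⟩ ⟨y, Or.inl ⟨hy, hsy, hxy⟩⟩
    (isSumOn2_hind_of_linked_closed hfat hslim _ fun _ _ h hp => hp.tail h)

namespace IsSumOn

variable {ι κ : Type} {P : ι → Set V} {Q : κ → Set V}

lemma exists_mem (hP : H.IsSumOn S P) (hx : x ∈ S) : ∃ i, x ∈ P i :=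
  Set.mem_iUnion.1 (hP.2.1 ▸ hx)

lemma eq_of_slim_mem (hP : H.IsSumOn S P) {i j : ι} (hs : H.slim x) (hi : x ∈ P i)
    (hj : x ∈ P j) : i = j :=
  (hP.2.2.1 x (hP.1 i hi) hs).unique hi hj

lemma fat_mem (hP : H.IsSumOn S P) {i : ι} (hx : x ∈ P i) (hs : H.slim x) {z : V}
    (hz : z ∈ S) (hzf : ¬ H.slim z) (hadj : H.adj x z) : z ∈ P i :=
  hP.2.2.2.1 i x hx hs z hz hzf hadj

lemma exists_slim_adj (hP : H.IsSumOn S P) {i : ι} {z : V} (hz : z ∈ P i)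
    (hzf : ¬ H.slim z) : ∃ x ∈ P i, H.slim x ∧ H.adj z x :=
  hP.2.2.2.2.1 i z hz hzf

lemma exists_slim_mem (hP : H.IsSumOn S P) {i : ι} (hne : (P i).Nonempty) :
    ∃ x ∈ P i, H.slim x := by
  obtain ⟨v, hv⟩ := hne
  by_cases hs : H.slim v
  · exact ⟨v, hv, hs⟩
  · obtain ⟨c, hc, hcs, _⟩ := hP.exists_slim_adj hv hs
    exact ⟨c, hc, hcs⟩

lemma mem_of_linked (hP : H.IsSumOn Set.univ P) {i : ι} (hx : x ∈ P i) (h : H.Linked x y) :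
    y ∈ P i := by
  obtain ⟨j, hj⟩ := hP.exists_mem (Set.mem_univ y)
  by_contra hy
  exact h.2.2 (hP.2.2.2.2.2 i j (fun hij => hy (hij ▸ hj)) x hx y hj h.1 h.2.1)

lemma mem_of_reflTransGen (hP : H.IsSumOn Set.univ P) {i : ι} (hx : x ∈ P i)
    (h : Relation.ReflTransGen H.Linked x y) : y ∈ P i := by
  induction h with
  | refl => exact hx
  | tail _ h ih => exact hP.mem_of_linked ih h

lemma subset_of_indecomposable (hP : H.IsSumOn Set.univ P) (hQ : H.IsSumOn Set.univ Q)
    {i : ι} {j : κ} (hind : H.Indecomposable (P i)) (hs : H.slim x) (hxP : x ∈ P i)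
    (hxQ : x ∈ Q j) : P i ⊆ Q j := by
  have hslim_mem : ∀ c ∈ P i, H.slim c → c ∈ Q j := fun c hc hcs =>
    hQ.mem_of_reflTransGen hxQ <| reflTransGen_linked_of_indecomposable
      (fun _ hv hvs z hzf hadj => hP.fat_mem hv hvs trivial hzf hadj)
      (fun _ hz hzf => hP.exists_slim_adj hz hzf) hind hxP hc hs hcs
  intro v hv
  by_cases hvs : H.slim v
  · exact hslim_mem v hv hvs
  · obtain ⟨c, hc, hcs, hadj⟩ := hP.exists_slim_adj hv hvs
    exact hQ.fat_mem (hslim_mem c hc hcs) hcs trivial hvs (H.symm hadj)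

lemma exists_equiv_of_indecomposable (hP : H.IsSumOn Set.univ P) (hQ : H.IsSumOn Set.univ Q)
    (hPind : ∀ i, H.Indecomposable (P i)) (hQind : ∀ j, H.Indecomposable (Q j)) :
    ∃ σ : ι ≃ κ, ∀ i, P i = Q (σ i) := by
  have hmatch : ∀ {i j z}, H.slim z → z ∈ P i → z ∈ Q j → P i = Q j := fun hs hxP hxQ =>
    (hP.subset_of_indecomposable hQ (hPind _) hs hxP hxQ).antisymm
      (hQ.subset_of_indecomposable hP (hQind _) hs hxQ hxP)
  choose x hxP hxs using fun i => hP.exists_slim_mem (hPind i).1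
  choose σ hσ using fun i => hQ.exists_mem (Set.mem_univ (x i))
  have hPσ : ∀ i, P i = Q (σ i) := fun i => hmatch (hxs i) (hxP i) (hσ i)
  refine ⟨Equiv.ofBijective σ ⟨fun i i' h => ?_, fun j => ?_⟩, hPσ⟩
  · exact hP.eq_of_slim_mem (hxs i) (hxP i) (by rw [hPσ, ← h]; exact hσ i)
  · obtain ⟨y, hyQ, hys⟩ := hQ.exists_slim_mem (hQind j).1
    obtain ⟨i, hyP⟩ := hP.exists_mem (Set.mem_univ y)
    exact ⟨i, hQ.eq_of_slim_mem hys (hPσ i ▸ hyP) hyQ⟩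

end IsSumOn

end HoffmanGraph

open HoffmanGraph in
theorem stmt0_general {V : Type} (H : HoffmanGraph V) (k l : ℕ)
    (P : Fin (k + 1) → Set V) (Q : Fin (l + 1) → Set V)
    (hP : H.IsSumOn Set.univ P) (hQ : H.IsSumOn Set.univ Q)
    (hPind : ∀ i, H.Indecomposable (P i)) (hQind : ∀ i, H.Indecomposable (Q i)) :
    k = l ∧ ∃ σ : Fin (k + 1) ≃ Fin (l + 1), ∀ i, P i = Q (σ i) := by
  obtain ⟨σ, hσ⟩ := hP.exists_equiv_of_indecomposable hQ hPind hQind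
  exact ⟨by simpa using Fintype.card_congr σ, σ, hσ⟩

open HoffmanGraph in
/-- Uniqueness of decompositions into indecomposable addends. -/
theorem stmt0 {V : Type} [Fintype V] (H : HoffmanGraph V) (k l : ℕ)
    (P : Fin (k + 1) → Set V) (Q : Fin (l + 1) → Set V)
    (hP : H.IsSumOn Set.univ P) (hQ : H.IsSumOn Set.univ Q)
    (hPind : ∀ i, H.Indecomposable (P i)) (hQind : ∀ i, H.Indecomposable (Q i)) :
    k = l ∧ ∃ σ : Fin (k + 1) ≃ Fin (l + 1), ∀ i, P i = Q (σ i) :=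
  stmt0_general H k l P Q hP hQ hPind hQind
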